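/- arXiv:1911.00567 — 5 statements merged into one kernel-verified Lean document; each statement's English description precedes it below -/
import Mathlib

section
/- Consider a finite-horizon MDP with ε-approximate low-rank structure. Then for every policy π and every timestep t ∈ {1,…,H}, the vector θ^π_t := θ^r_t + ∫ ψ_t(s') V^π_{t+1}(s') dμ_t(s') satisfies |Q^π_t(s,a) − ⟨φ_t(s,a), θ^π_t⟩| ≤ (H − t + 1)·ε for all (s,a) ∈ S × A. -/
open MeasureTheory
open scoped RealInnerProductSpace

/-- In a finite-horizon MDP with `ε`-approximate low-rank structure, for every policy `π`
and every timestep `t ∈ {1,…,H}`, the vector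
`θπ_t := θr_t + ∫ V^π_{t+1}(s') • ψ_t(s') dμ_t(s')` satisfies
`|Q^π_t(s,a) − ⟪φ_t(s,a), θπ_t⟫| ≤ (H − t + 1) ε` for all `(s,a)`. -/
theorem approx_linear_Q_of_approx_lowrank
    {S : Type*} [MeasurableSpace S] {A : Type*} [Nonempty A]
    (H d : ℕ) (hH : 1 ≤ H)
    -- features, rewards, transitions
    (φ : ℕ → S → A → EuclideanSpace ℝ (Fin d))
    (r : ℕ → S → A → ℝ) (hr01 : ∀ t s a, r t s a ∈ Set.Icc (0 : ℝ) 1)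
    (P : ℕ → S → A → Measure S)
    (hP_prob : ∀ t s a, IsProbabilityMeasure (P t s a))
    -- a policy and its value functions, defined by backward recursion
    (π : ℕ → S → A)
    (Q : ℕ → S → A → ℝ) (V : ℕ → S → ℝ)
    (hV_meas : ∀ t, Measurable (V t))
    (hV_top : ∀ s, V (H + 1) s = 0)
    (hQ : ∀ t, 1 ≤ t → t ≤ H → ∀ s a,
      Q t s a = r t s a + ∫ s', V (t + 1) s' ∂(P t s a))
    (hV_int : ∀ t, 1 ≤ t → t ≤ H → ∀ s a, Integrable (V (t + 1)) (P t s a))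
    (hV : ∀ t, 1 ≤ t → t ≤ H → ∀ s, V t s = Q t s (π t s))
    -- since rewards lie in [0,1], the value functions satisfy 0 ≤ V^π_{t+1} ≤ H − t
    (hV_bdd : ∀ t, 1 ≤ t → t ≤ H → ∀ s,
      V (t + 1) s ∈ Set.Icc (0 : ℝ) ((H : ℝ) - t))
    -- ε-approximate low-rank structure
    (ε : ℝ) (hε : 0 ≤ ε) (Lψ : ℝ)
    (μ : ℕ → Measure S) (hμ : ∀ t, SigmaFinite (μ t))
    (ψ : ℕ → S → EuclideanSpace ℝ (Fin d))
    (hψ_int : ∀ t, Integrable (ψ t) (μ t))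
    (hψ_L : ∀ t, 1 ≤ t → t ≤ H → ∫ s', ‖ψ t s'‖ ∂(μ t) ≤ Lψ)
    (θr : ℕ → EuclideanSpace ℝ (Fin d))
    (hr_approx : ∀ t, 1 ≤ t → t ≤ H → ∀ s a, |r t s a - ⟪φ t s a, θr t⟫| ≤ ε)
    (p : ℕ → S → A → S → ℝ)
    (hp_nonneg : ∀ t s a s', 0 ≤ p t s a s')
    (hp_meas : ∀ t s a, Measurable (p t s a))
    (hP_dens : ∀ t, 1 ≤ t → t ≤ H → ∀ s a,
      P t s a = (μ t).withDensity fun s' => ENNReal.ofReal (p t s a s'))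
    (hΔP_int : ∀ t, 1 ≤ t → t ≤ H → ∀ s a,
      Integrable (fun s' => |p t s a s' - ⟪φ t s a, ψ t s'⟫|) (μ t))
    (hΔP_eps : ∀ t, 1 ≤ t → t ≤ H → ∀ s a,
      ∫ s', |p t s a s' - ⟪φ t s a, ψ t s'⟫| ∂(μ t) ≤ ε)
    (hVψ_int : ∀ t, 1 ≤ t → t ≤ H →
      Integrable (fun s' => V (t + 1) s' • ψ t s') (μ t)) :
    ∀ t, 1 ≤ t → t ≤ H → ∀ s a,
      |Q t s a - ⟪φ t s a, θr t + ∫ s', V (t + 1) s' • ψ t s' ∂(μ t)⟫| ≤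
        ((H : ℝ) - t + 1) * ε := by
  intro t ht1 htH s a
  have hHt : (0 : ℝ) ≤ (H : ℝ) - t := by
    have : (t : ℝ) ≤ H := by exact_mod_cast htH
    linarith
  set c := φ t s a with hc
  -- inner product commutes with the integral
  have hinner : ⟪c, ∫ s', V (t + 1) s' • ψ t s' ∂(μ t)⟫
      = ∫ s', V (t + 1) s' * ⟪c, ψ t s'⟫ ∂(μ t) := by
    rw [← integral_inner (hVψ_int t ht1 htH)]
    congr 1; funext s'
    rw [real_inner_smul_right]
  have hf : Measurable fun s' => (p t s a s').toNNReal :=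
    (hp_meas t s a).real_toNNReal
  have hPd : P t s a
      = (μ t).withDensity fun s' => ((p t s a s').toNNReal : ENNReal) := by
    rw [hP_dens t ht1 htH s a]; rfl
  have hVint : Integrable (V (t + 1))
      ((μ t).withDensity fun s' => ((p t s a s').toNNReal : ENNReal)) := by
    rw [← hPd]; exact hV_int t ht1 htH s a
  have hint1 : Integrable (fun s' => p t s a s' * V (t + 1) s') (μ t) := by
    have h := (integrable_withDensity_iff_integrable_smul hf).mp hVint
    refine h.congr (Filter.Eventually.of_forall fun s' => ?_)
    simp [NNReal.smul_def, Real.coe_toNNReal _ (hp_nonneg t s a s')]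
  have hIeq : ∫ s', V (t + 1) s' ∂(P t s a)
      = ∫ s', p t s a s' * V (t + 1) s' ∂(μ t) := by
    rw [hPd, integral_withDensity_eq_integral_smul hf]
    congr 1; funext s'
    simp [NNReal.smul_def, Real.coe_toNNReal _ (hp_nonneg t s a s')]
  have hint2 : Integrable (fun s' => V (t + 1) s' * ⟪c, ψ t s'⟫) (μ t) := by
    have h := ((innerSL ℝ c).integrable_comp (hVψ_int t ht1 htH))
    refine h.congr (Filter.Eventually.of_forall fun s' => ?_)
    simp [real_inner_smul_right]
  have h2 : |∫ s', V (t + 1) s' ∂(P t s a)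
      - ⟪c, ∫ s', V (t + 1) s' • ψ t s' ∂(μ t)⟫| ≤ ((H : ℝ) - t) * ε := by
    rw [hinner, hIeq, ← integral_sub hint1 hint2]
    have habs : |∫ s', (p t s a s' * V (t + 1) s'
        - V (t + 1) s' * ⟪c, ψ t s'⟫) ∂(μ t)|
        ≤ ∫ s', |p t s a s' * V (t + 1) s' - V (t + 1) s' * ⟪c, ψ t s'⟫| ∂(μ t) := by
      simpa [Real.norm_eq_abs] using
        norm_integral_le_integral_norm
          (fun s' => p t s a s' * V (t + 1) s' - V (t + 1) s' * ⟪c, ψ t s'⟫) (μ := μ t)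
    refine habs.trans ?_
    have hmono : ∫ s', |p t s a s' * V (t + 1) s' - V (t + 1) s' * ⟪c, ψ t s'⟫| ∂(μ t)
        ≤ ∫ s', ((H : ℝ) - t) * |p t s a s' - ⟪c, ψ t s'⟫| ∂(μ t) := by
      refine integral_mono (hint1.sub hint2).abs
        ((hΔP_int t ht1 htH s a).const_mul _) fun s' => ?_
      have hV0 := (hV_bdd t ht1 htH s').1
      have hV1 := (hV_bdd t ht1 htH s').2
      have : |p t s a s' * V (t + 1) s' - V (t + 1) s' * ⟪c, ψ t s'⟫|
          = |V (t + 1) s'| * |p t s a s' - ⟪c, ψ t s'⟫| := by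
        rw [← abs_mul]; ring_nf
      rw [this, abs_of_nonneg hV0]
      exact mul_le_mul_of_nonneg_right hV1 (abs_nonneg _)
    refine hmono.trans ?_
    rw [integral_const_mul]
    exact mul_le_mul_of_nonneg_left (hΔP_eps t ht1 htH s a) hHt
  have h1 := hr_approx t ht1 htH s a
  have hsplit : Q t s a - ⟪c, θr t + ∫ s', V (t + 1) s' • ψ t s' ∂(μ t)⟫
      = (r t s a - ⟪c, θr t⟫)
        + (∫ s', V (t + 1) s' ∂(P t s a)
            - ⟪c, ∫ s', V (t + 1) s' • ψ t s' ∂(μ t)⟫) := by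
    rw [hQ t ht1 htH s a, inner_add_right]; ring
  rw [hsplit]
  calc |(r t s a - ⟪c, θr t⟫) + (∫ s', V (t + 1) s' ∂(P t s a)
          - ⟪c, ∫ s', V (t + 1) s' • ψ t s' ∂(μ t)⟫)|
      ≤ |r t s a - ⟪c, θr t⟫| + |∫ s', V (t + 1) s' ∂(P t s a)
          - ⟪c, ∫ s', V (t + 1) s' • ψ t s' ∂(μ t)⟫| := abs_add_le _ _
    _ ≤ ε + ((H : ℝ) - t) * ε := add_le_add h1 h2
    _ = ((H : ℝ) - t + 1) * ε := by ring
end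

section
/- (Misspecification bound.) Consider a finite-horizon MDP with ε-approximate low-rank structure and the regression data setup. Fix a policy π and suppose sup_s |V̄(s)| ≤ 2H and sup_s |V̄(s) − V^π_{t+1}(s)| ≤ 3H. Then for all (s,a) ∈ S × A: |m^π(s,a)| ≤ 4·ε·H·(√(d·k)·‖φ_t(s,a)‖_{Σ⁻¹} + 1), where ‖x‖_{Σ⁻¹} := √(xᵀ Σ⁻¹ x). -/
open MeasureTheory Matrix Finset

/-!
All three terms of `m^π` are built from reward errors, each at most `ε`, and integrals of the
density error `Δ^P_t` against bounded functions `g`, each at most `ε · sup |g|`. Backward induction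
puts `V^π_{t+1}` in `[0, H - t]`. Hence `Δ^π_t = Δ^r_t + ∫ Δ^P_t V^π_{t+1}` is at most `εH`, the
last term is at most `3εH`, and so are the coefficients `cᵢ = Δ^r_t + ∫ Δ^P_t V̄` of the regression
term `φᵀ Σ⁻¹ ∑ cᵢ φᵢ`. Put `wᵢ = φᵀ Σ⁻¹ φᵢ` and `y = Σ⁻¹ φ`. Since `Σ ⪰ ∑ φᵢ φᵢᵀ`, we get
`∑ wᵢ² ≤ yᵀ Σ y = ‖φ‖²_{Σ⁻¹}`, and Cauchy–Schwarz bounds the regression term by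
`3εH √(k - 1) ‖φ‖_{Σ⁻¹}`.
-/

section RegularizedGram

variable {ι n : Type*} [Fintype ι] [Fintype n] [DecidableEq n]

lemma posDef_smul_one_add_sum_vecMulVec {lam : ℝ} (hlam : 0 < lam) (v : ι → n → ℝ) :
    (lam • (1 : Matrix n n ℝ) + ∑ i, vecMulVec (v i) (v i)).PosDef :=
  (PosDef.one.smul hlam).add_posSemidef
    (posSemidef_sum _ fun i _ => by simpa using posSemidef_vecMulVec_self_star (v i))

lemma sum_sq_dotProduct_le_dotProduct_mulVec {lam : ℝ} (hlam : 0 ≤ lam) (v : ι → n → ℝ)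
    (y : n → ℝ) :
    ∑ i, (v i ⬝ᵥ y) ^ 2 ≤ y ⬝ᵥ ((lam • (1 : Matrix n n ℝ) + ∑ i, vecMulVec (v i) (v i)) *ᵥ y) := by
  have hexpand : y ⬝ᵥ ((lam • (1 : Matrix n n ℝ) + ∑ i, vecMulVec (v i) (v i)) *ᵥ y)
      = lam * (y ⬝ᵥ y) + ∑ i, (v i ⬝ᵥ y) ^ 2 := by
    simp only [add_mulVec, smul_mulVec, one_mulVec, sum_mulVec, vecMulVec_mulVec, dotProduct_add,
      dotProduct_smul, dotProduct_sum, smul_eq_mul, op_smul_eq_mul, dotProduct_comm y (v _), sq]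
  have hyy : 0 ≤ y ⬝ᵥ y := Finset.sum_nonneg fun j _ => mul_self_nonneg (y j)
  rw [hexpand]
  exact le_add_of_nonneg_left (mul_nonneg hlam hyy)

lemma sum_sq_dotProduct_inv_mulVec_le {lam : ℝ} (hlam : 0 < lam) (v : ι → n → ℝ) (x : n → ℝ) :
    ∑ i, (x ⬝ᵥ ((lam • (1 : Matrix n n ℝ) + ∑ i, vecMulVec (v i) (v i))⁻¹ *ᵥ v i)) ^ 2
      ≤ x ⬝ᵥ ((lam • (1 : Matrix n n ℝ) + ∑ i, vecMulVec (v i) (v i))⁻¹ *ᵥ x) := by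
  set G := lam • (1 : Matrix n n ℝ) + ∑ i, vecMulVec (v i) (v i)
  have hG := posDef_smul_one_add_sum_vecMulVec hlam v
  have hGinv : G⁻¹ᵀ = G⁻¹ := by
    simpa [conjTranspose_eq_transpose_of_trivial] using hG.inv.isHermitian.eq
  have hGG : G *ᵥ (G⁻¹ *ᵥ x) = x := by
    rw [mulVec_mulVec, mul_nonsing_inv _ ((isUnit_iff_isUnit_det G).mp hG.isUnit), one_mulVec]
  have hsymm : ∀ w, x ⬝ᵥ (G⁻¹ *ᵥ w) = w ⬝ᵥ (G⁻¹ *ᵥ x) := fun w => by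
    rw [dotProduct_mulVec, ← mulVec_transpose, hGinv, dotProduct_comm]
  have key : ∑ i, (v i ⬝ᵥ (G⁻¹ *ᵥ x)) ^ 2 ≤ (G⁻¹ *ᵥ x) ⬝ᵥ (G *ᵥ (G⁻¹ *ᵥ x)) :=
    sum_sq_dotProduct_le_dotProduct_mulVec hlam.le v (G⁻¹ *ᵥ x)
  simpa only [hsymm, hGG, dotProduct_comm _ x] using key

lemma abs_dotProduct_inv_mulVec_sum_smul_le {lam : ℝ} (hlam : 0 < lam) (v : ι → n → ℝ)
    (x : n → ℝ) {c : ι → ℝ} {C : ℝ} (hc : ∀ i, |c i| ≤ C) :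
    |x ⬝ᵥ ((lam • (1 : Matrix n n ℝ) + ∑ i, vecMulVec (v i) (v i))⁻¹ *ᵥ ∑ i, c i • v i)|
      ≤ C * (√(Fintype.card ι) *
        √(x ⬝ᵥ ((lam • (1 : Matrix n n ℝ) + ∑ i, vecMulVec (v i) (v i))⁻¹ *ᵥ x))) := by
  set G := lam • (1 : Matrix n n ℝ) + ∑ i, vecMulVec (v i) (v i)
  set w : ι → ℝ := fun i => x ⬝ᵥ (G⁻¹ *ᵥ v i)
  have hCS : (∑ i, |w i|) ^ 2 ≤ Fintype.card ι * (x ⬝ᵥ (G⁻¹ *ᵥ x)) := by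
    calc (∑ i, |w i|) ^ 2 ≤ Fintype.card ι * ∑ i, |w i| ^ 2 := sq_sum_le_card_mul_sum_sq
      _ ≤ Fintype.card ι * (x ⬝ᵥ (G⁻¹ *ᵥ x)) := by
        simpa only [sq_abs] using mul_le_mul_of_nonneg_left
          (sum_sq_dotProduct_inv_mulVec_le hlam v x) (Nat.cast_nonneg _)
  obtain hι | ⟨⟨i₀⟩⟩ := isEmpty_or_nonempty ι
  · simp
  have hC : 0 ≤ C := (abs_nonneg _).trans (hc i₀)
  calc |x ⬝ᵥ (G⁻¹ *ᵥ ∑ i, c i • v i)| = |∑ i, c i * w i| := by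
        simp only [mulVec_sum, mulVec_smul, dotProduct_sum, dotProduct_smul, smul_eq_mul, w]
    _ ≤ ∑ i, C * |w i| := by
        refine (abs_sum_le_sum_abs _ _).trans (sum_le_sum fun i _ => ?_)
        rw [abs_mul]
        exact mul_le_mul_of_nonneg_right (hc i) (abs_nonneg _)
    _ ≤ C * (√(Fintype.card ι) * √(x ⬝ᵥ (G⁻¹ *ᵥ x))) := by
        rw [← mul_sum, ← Real.sqrt_mul (Nat.cast_nonneg _)]
        gcongr
        exact Real.le_sqrt_of_sq_le hCS

end RegularizedGram

lemma sqrt_mul_sqrt_dotProduct_le_of_le {n : Type*} [Fintype n] {m k : ℕ} (hmk : m ≤ k)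
    (M : Matrix n n ℝ) (x : n → ℝ) :
    √m * √(x ⬝ᵥ (M *ᵥ x)) ≤ √((Fintype.card n : ℝ) * k) * √(x ⬝ᵥ (M *ᵥ x)) := by
  obtain hn | hn := isEmpty_or_nonempty n
  · simp [dotProduct]
  gcongr
  calc (m : ℝ) ≤ k := by exact_mod_cast hmk
    _ ≤ Fintype.card n * k :=
      le_mul_of_one_le_left (Nat.cast_nonneg _) (by exact_mod_cast Fintype.card_pos)

lemma add_integral_mem_Icc {α : Type*} [MeasurableSpace α] {P : Measure α}
    [IsProbabilityMeasure P] {r c : ℝ} {f : α → ℝ} (hr : r ∈ Set.Icc 0 1)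
    (hf : ∀ x, f x ∈ Set.Icc 0 c) :
    r + ∫ x, f x ∂P ∈ Set.Icc 0 (1 + c) := by
  have h0 : 0 ≤ ∫ x, f x ∂P := integral_nonneg fun x => (hf x).1
  have hc : ∫ x, f x ∂P ≤ c := by
    simpa using integral_mono_of_nonneg (.of_forall fun x => (hf x).1)
      (integrable_const (μ := P) c) (.of_forall fun x => (hf x).2)
  exact ⟨by linarith [hr.1], by linarith [hr.2]⟩

lemma value_mem_Icc {S A : Type*} [MeasurableSpace S] (H : ℕ) (r : ℕ → S → A → ℝ)
    (hr : ∀ u s a, r u s a ∈ Set.Icc 0 1) (P : ℕ → S → A → Measure S)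
    (hP : ∀ u s a, IsProbabilityMeasure (P u s a)) (V : ℕ → S → ℝ)
    (hV_top : ∀ s, V (H + 1) s = 0)
    (hV : ∀ u, 1 ≤ u → u ≤ H → ∀ s, ∃ a, V u s = r u s a + ∫ s', V (u + 1) s' ∂(P u s a))
    {u : ℕ} (hu : 1 ≤ u) (huH : u ≤ H + 1) (s : S) :
    V u s ∈ Set.Icc 0 ((H : ℝ) + 1 - u) := by
  induction huH using Nat.decreasingInduction generalizing s with
  | self => simp [hV_top]
  | of_succ u huH ih =>
    obtain ⟨a, ha⟩ := hV u hu (by omega) s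
    have := hP u s a
    have h := add_integral_mem_Icc (P := P u s a) (hr u s a) (ih (by omega))
    rw [ha]
    convert h using 2
    push_cast
    ring

section Integrals

variable {α : Type*} [MeasurableSpace α] {μ : Measure α}

lemma abs_integral_mul_le_mul_integral_abs {f g : α → ℝ} {C : ℝ} (hf : Integrable f μ)
    (hg : AEStronglyMeasurable g μ) (hgC : ∀ x, |g x| ≤ C) :
    |∫ x, f x * g x ∂μ| ≤ C * ∫ x, |f x| ∂μ := by
  rw [← integral_const_mul]
  refine abs_integral_le_integral_abs.trans (integral_mono
    (hf.mul_bdd (c := C) hg (.of_forall hgC)).abs (hf.abs.const_mul C) fun x => ?_)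
  rw [abs_mul, mul_comm C]
  exact mul_le_mul_of_nonneg_left (hgC x) (abs_nonneg _)

lemma integral_withDensity_ofReal {p : α → ℝ} (hp : Measurable p) (hp0 : ∀ x, 0 ≤ p x)
    (g : α → ℝ) :
    ∫ x, g x ∂μ.withDensity (fun x => ENNReal.ofReal (p x)) = ∫ x, p x * g x ∂μ := by
  rw [integral_withDensity_eq_integral_toReal_smul hp.ennreal_ofReal
    (.of_forall fun _ => ENNReal.ofReal_lt_top)]
  simp only [ENNReal.toReal_ofReal (hp0 _), smul_eq_mul]

variable {n : Type*} [Fintype n]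

lemma MeasureTheory.Integrable.const_dotProduct {f : α → n → ℝ} (hf : Integrable f μ)
    (x : n → ℝ) : Integrable (fun a => x ⬝ᵥ f a) μ :=
  integrable_finsetSum _ fun i _ => (hf.eval i).const_mul (x i)

lemma dotProduct_integral {f : α → n → ℝ} (hf : Integrable f μ) (x : n → ℝ) :
    x ⬝ᵥ ∫ a, f a ∂μ = ∫ a, x ⬝ᵥ f a ∂μ := by
  simp only [dotProduct, eval_integral hf.eval, ← integral_const_mul]
  exact (integral_finsetSum _ fun i _ => (hf.eval i).const_mul (x i)).symm

lemma abs_integral_sub_dotProduct_mul_le {p : α → ℝ} (hp : Measurable p) {ψ : α → n → ℝ}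
    (hψ : Integrable ψ μ) (x : n → ℝ) (hΔ : Integrable (fun a => |p a - x ⬝ᵥ ψ a|) μ)
    {g : α → ℝ} {C : ℝ} (hg : Measurable g) (hgC : ∀ a, |g a| ≤ C) :
    |∫ a, (p a - x ⬝ᵥ ψ a) * g a ∂μ| ≤ C * ∫ a, |p a - x ⬝ᵥ ψ a| ∂μ := by
  have hmeas : AEStronglyMeasurable (fun a => p a - x ⬝ᵥ ψ a) μ :=
    hp.aestronglyMeasurable.sub (hψ.const_dotProduct x).aestronglyMeasurable
  exact abs_integral_mul_le_mul_integral_abs ((integrable_norm_iff hmeas).mp hΔ)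
    hg.aestronglyMeasurable hgC

lemma add_integral_withDensity_sub_dotProduct_eq {p : α → ℝ} (hp : Measurable p)
    (hp0 : ∀ a, 0 ≤ p a) {V : α → ℝ}
    (hV : Integrable V (μ.withDensity fun a => ENNReal.ofReal (p a))) {ψ : α → n → ℝ}
    (hVψ : Integrable (fun a => V a • ψ a) μ) (r : ℝ) (x θ : n → ℝ) :
    r + ∫ a, V a ∂μ.withDensity (fun a => ENNReal.ofReal (p a)) - x ⬝ᵥ (θ + ∫ a, V a • ψ a ∂μ)
      = (r - x ⬝ᵥ θ) + ∫ a, (p a - x ⬝ᵥ ψ a) * V a ∂μ := by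
  have hpV : Integrable (fun a => p a * V a) μ := by
    simpa [ENNReal.toReal_ofReal (hp0 _)] using
      (integrable_withDensity_iff_integrable_smul' hp.ennreal_ofReal
        (.of_forall fun _ => ENNReal.ofReal_lt_top)).mp hV
  have hψV : Integrable (fun a => (x ⬝ᵥ ψ a) * V a) μ := by
    simpa only [dotProduct_smul, smul_eq_mul, mul_comm (V _)] using hVψ.const_dotProduct x
  rw [integral_withDensity_ofReal hp hp0, dotProduct_add, dotProduct_integral hVψ]
  simp only [dotProduct_smul, smul_eq_mul, sub_mul, integral_sub hpV hψV, mul_comm (V _)]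
  ring

end Integrals

theorem misspecification_bound_general
    {S : Type*} [MeasurableSpace S] {A : Type*}
    (H d : ℕ)
    -- features, rewards, transitions
    (φ : ℕ → S → A → (Fin d → ℝ))
    (r : ℕ → S → A → ℝ) (hr01 : ∀ t s a, r t s a ∈ Set.Icc (0 : ℝ) 1)
    (P : ℕ → S → A → Measure S)
    (hP_prob : ∀ t s a, IsProbabilityMeasure (P t s a))
    -- a policy and its value functions, defined by backward recursion
    (π : ℕ → S → A)
    (Q : ℕ → S → A → ℝ) (V : ℕ → S → ℝ)
    (hV_meas : ∀ u, Measurable (V u))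
    (hV_top : ∀ s, V (H + 1) s = 0)
    (hQ : ∀ u, 1 ≤ u → u ≤ H → ∀ s a,
      Q u s a = r u s a + ∫ s', V (u + 1) s' ∂(P u s a))
    (hV : ∀ u, 1 ≤ u → u ≤ H → ∀ s, V u s = Q u s (π u s))
    -- ε-approximate low-rank structure
    (ε : ℝ) (hε : 0 ≤ ε)
    (μ : ℕ → Measure S)
    (ψ : ℕ → S → (Fin d → ℝ))
    (hψ_int : ∀ u, Integrable (ψ u) (μ u))
    (θr : ℕ → (Fin d → ℝ))
    (hr_approx : ∀ u, 1 ≤ u → u ≤ H → ∀ s a, |r u s a - φ u s a ⬝ᵥ θr u| ≤ ε)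
    (p : ℕ → S → A → S → ℝ)
    (hp_nonneg : ∀ u s a s', 0 ≤ p u s a s')
    (hp_meas : ∀ u s a, Measurable (p u s a))
    (hP_dens : ∀ u, 1 ≤ u → u ≤ H → ∀ s a,
      P u s a = (μ u).withDensity fun s' => ENNReal.ofReal (p u s a s'))
    (hΔP_int : ∀ u, 1 ≤ u → u ≤ H → ∀ s a,
      Integrable (fun s' => |p u s a s' - φ u s a ⬝ᵥ ψ u s'|) (μ u))
    (hΔP_eps : ∀ u, 1 ≤ u → u ≤ H → ∀ s a,
      ∫ s', |p u s a s' - φ u s a ⬝ᵥ ψ u s'| ∂(μ u) ≤ ε)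
    -- regression data setup at a fixed timestep t and episode k
    (t : ℕ) (ht1 : 1 ≤ t) (htH : t ≤ H)
    (k : ℕ)
    (lam : ℝ) (hlam : 0 < lam)
    (sD : Fin (k - 1) → S) (aD : Fin (k - 1) → A)
    (φD : Fin (k - 1) → (Fin d → ℝ)) (hφD : ∀ i, φD i = φ t (sD i) (aD i))
    (Sig : Matrix (Fin d) (Fin d) ℝ)
    (hSig : Sig = lam • (1 : Matrix (Fin d) (Fin d) ℝ) +
      ∑ i, Matrix.vecMulVec (φD i) (φD i))
    -- a bounded measurable next-state value function used in the regression
    (Vb : S → ℝ) (hVb_meas : Measurable Vb)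
    -- θ^π_t and the misspecification term m^π
    (θπ : Fin d → ℝ)
    (hθπ : θπ = θr t + ∫ s', V (t + 1) s' • ψ t s' ∂(μ t))
    (m : S → A → ℝ)
    (hm : ∀ s a, m s a =
      φ t s a ⬝ᵥ (Sig⁻¹ *ᵥ ∑ i,
        ((r t (sD i) (aD i) - φD i ⬝ᵥ θr t) +
          ∫ s', (p t (sD i) (aD i) s' - φD i ⬝ᵥ ψ t s') * Vb s' ∂(μ t)) • φD i)
      + (Q t s a - φ t s a ⬝ᵥ θπ)
      - ∫ s', (p t s a s' - φ t s a ⬝ᵥ ψ t s') * (Vb s' - V (t + 1) s') ∂(μ t))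
    -- boundedness of the regression value function
    (hVb_2H : ∀ s, |Vb s| ≤ 2 * H)
    (hVbV_3H : ∀ s, |Vb s - V (t + 1) s| ≤ 3 * H) :
    ∀ s a,
      |m s a| ≤ 4 * ε * H *
        (Real.sqrt ((d : ℝ) * k) * Real.sqrt (φ t s a ⬝ᵥ (Sig⁻¹ *ᵥ φ t s a)) + 1) := by
  intro s a
  have hH : (1 : ℝ) ≤ H := by exact_mod_cast ht1.trans htH
  have hV_bdd : ∀ s', |V (t + 1) s'| ≤ H - 1 := fun s' => by
    obtain ⟨h0, h1⟩ := value_mem_Icc H r hr01 P hP_prob V hV_top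
      (fun u hu huH s => ⟨π u s, (hV u hu huH s).trans (hQ u hu huH s _)⟩)
      (by omega : 1 ≤ t + 1) (by omega) s'
    have ht : (1 : ℝ) ≤ t := by exact_mod_cast ht1
    rw [abs_of_nonneg h0]
    push_cast at h1
    linarith
  have hΔP : ∀ s a {g : S → ℝ} {C : ℝ}, 0 ≤ C → Measurable g → (∀ x, |g x| ≤ C) →
      |∫ s', (p t s a s' - φ t s a ⬝ᵥ ψ t s') * g s' ∂(μ t)| ≤ C * ε := fun s a _ _ hC hg hgC =>
    (abs_integral_sub_dotProduct_mul_le (hp_meas t s a) (hψ_int t) _ (hΔP_int t ht1 htH s a) hg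
      hgC).trans (mul_le_mul_of_nonneg_left (hΔP_eps t ht1 htH s a) hC)
  have hlin_err : ∀ s a {g : S → ℝ} {C : ℝ}, 0 ≤ C → Measurable g → (∀ x, |g x| ≤ C) →
      |(r t s a - φ t s a ⬝ᵥ θr t) + ∫ s', (p t s a s' - φ t s a ⬝ᵥ ψ t s') * g s' ∂(μ t)|
        ≤ (C + 1) * ε := fun s a _ _ hC hg hgC =>
    (abs_add_le _ _).trans (by linarith [hr_approx t ht1 htH s a, hΔP s a hC hg hgC])
  have hregr : |φ t s a ⬝ᵥ (Sig⁻¹ *ᵥ ∑ i, ((r t (sD i) (aD i) - φD i ⬝ᵥ θr t) +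
      ∫ s', (p t (sD i) (aD i) s' - φD i ⬝ᵥ ψ t s') * Vb s' ∂(μ t)) • φD i)|
        ≤ 3 * ε * H * (√((d : ℝ) * k) * √(φ t s a ⬝ᵥ (Sig⁻¹ *ᵥ φ t s a))) := by
    have hcoef := fun i => (hφD i ▸ hlin_err (sD i) (aD i) (by positivity) hVb_meas hVb_2H).trans
      (by nlinarith : (2 * H + 1) * ε ≤ 3 * ε * H)
    have hdk := sqrt_mul_sqrt_dotProduct_le_of_le (Nat.sub_le k 1) Sig⁻¹ (φ t s a)
    have h := abs_dotProduct_inv_mulVec_sum_smul_le hlam φD (φ t s a) hcoef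
    rw [← hSig] at h
    rw [Fintype.card_fin] at h hdk
    exact h.trans (mul_le_mul_of_nonneg_left hdk (by positivity))
  have hbias : |Q t s a - φ t s a ⬝ᵥ θπ| ≤ H * ε := by
    have hV_int : Integrable (V (t + 1)) (P t s a) :=
      have := hP_prob t s a
      .of_bound (hV_meas _).aestronglyMeasurable _ (.of_forall hV_bdd)
    rw [hP_dens t ht1 htH s a] at hV_int
    rw [hQ t ht1 htH s a, hP_dens t ht1 htH s a, hθπ,
      add_integral_withDensity_sub_dotProduct_eq (hp_meas t s a) (hp_nonneg t s a) hV_int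
        ((hψ_int t).bdd_smul _ (hV_meas _).aestronglyMeasurable (.of_forall hV_bdd))]
    simpa using hlin_err s a (by linarith) (hV_meas (t + 1)) hV_bdd
  have hcorr := hΔP s a (g := fun s' => Vb s' - V (t + 1) s') (by positivity)
    (hVb_meas.sub (hV_meas (t + 1))) hVbV_3H
  have hX : 0 ≤ ε * H * (√((d : ℝ) * k) * √(φ t s a ⬝ᵥ (Sig⁻¹ *ᵥ φ t s a))) := by positivity
  rw [hm, abs_le]
  rw [abs_le] at hregr hbias hcorr
  constructor <;> linarith

/-- Misspecification bound.
In a finite-horizon MDP with `ε`-approximate low-rank structure and the regression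
data setup, if `sup_s |V̄(s)| ≤ 2H` and `sup_s |V̄(s) − V^π_{t+1}(s)| ≤ 3H`, then
for all `(s,a)`: `|m^π(s,a)| ≤ 4 ε H (√(d k) ‖φ_t(s,a)‖_{Σ⁻¹} + 1)`. -/
theorem misspecification_bound
    {S : Type*} [MeasurableSpace S] {A : Type*} [Nonempty A]
    (H d : ℕ) (hH : 1 ≤ H)
    -- features, rewards, transitions
    (φ : ℕ → S → A → (Fin d → ℝ))
    (r : ℕ → S → A → ℝ) (hr01 : ∀ t s a, r t s a ∈ Set.Icc (0 : ℝ) 1)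
    (P : ℕ → S → A → Measure S)
    (hP_prob : ∀ t s a, IsProbabilityMeasure (P t s a))
    -- a policy and its value functions, defined by backward recursion
    (π : ℕ → S → A)
    (Q : ℕ → S → A → ℝ) (V : ℕ → S → ℝ)
    (hV_meas : ∀ u, Measurable (V u))
    (hV_top : ∀ s, V (H + 1) s = 0)
    (hQ : ∀ u, 1 ≤ u → u ≤ H → ∀ s a,
      Q u s a = r u s a + ∫ s', V (u + 1) s' ∂(P u s a))
    (hV_int : ∀ u, 1 ≤ u → u ≤ H → ∀ s a, Integrable (V (u + 1)) (P u s a))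
    (hV : ∀ u, 1 ≤ u → u ≤ H → ∀ s, V u s = Q u s (π u s))
    -- ε-approximate low-rank structure
    (ε : ℝ) (hε : 0 ≤ ε) (Lψ : ℝ)
    (μ : ℕ → Measure S) (hμ : ∀ u, SigmaFinite (μ u))
    (ψ : ℕ → S → (Fin d → ℝ))
    (hψ_int : ∀ u, Integrable (ψ u) (μ u))
    (hψ_L : ∀ u, 1 ≤ u → u ≤ H → ∫ s', Real.sqrt (ψ u s' ⬝ᵥ ψ u s') ∂(μ u) ≤ Lψ)
    (θr : ℕ → (Fin d → ℝ))
    (hr_approx : ∀ u, 1 ≤ u → u ≤ H → ∀ s a, |r u s a - φ u s a ⬝ᵥ θr u| ≤ ε)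
    (p : ℕ → S → A → S → ℝ)
    (hp_nonneg : ∀ u s a s', 0 ≤ p u s a s')
    (hp_meas : ∀ u s a, Measurable (p u s a))
    (hP_dens : ∀ u, 1 ≤ u → u ≤ H → ∀ s a,
      P u s a = (μ u).withDensity fun s' => ENNReal.ofReal (p u s a s'))
    (hΔP_int : ∀ u, 1 ≤ u → u ≤ H → ∀ s a,
      Integrable (fun s' => |p u s a s' - φ u s a ⬝ᵥ ψ u s'|) (μ u))
    (hΔP_eps : ∀ u, 1 ≤ u → u ≤ H → ∀ s a,
      ∫ s', |p u s a s' - φ u s a ⬝ᵥ ψ u s'| ∂(μ u) ≤ ε)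
    -- regression data setup at a fixed timestep t and episode k
    (t : ℕ) (ht1 : 1 ≤ t) (htH : t ≤ H)
    (k : ℕ) (hk : 1 ≤ k)
    (lam : ℝ) (hlam : 0 < lam)
    (sD : Fin (k - 1) → S) (aD : Fin (k - 1) → A) (s'D : Fin (k - 1) → S)
    (φD : Fin (k - 1) → (Fin d → ℝ)) (hφD : ∀ i, φD i = φ t (sD i) (aD i))
    (Sig : Matrix (Fin d) (Fin d) ℝ)
    (hSig : Sig = lam • (1 : Matrix (Fin d) (Fin d) ℝ) +
      ∑ i, Matrix.vecMulVec (φD i) (φD i))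
    -- a bounded measurable next-state value function used in the regression
    (Vb : S → ℝ) (hVb_meas : Measurable Vb) (hVb_bdd : ∃ C, ∀ s, |Vb s| ≤ C)
    (hVb_int : ∀ s a, Integrable Vb (P t s a))
    -- θ^π_t and the misspecification term m^π
    (θπ : Fin d → ℝ)
    (hθπ : θπ = θr t + ∫ s', V (t + 1) s' • ψ t s' ∂(μ t))
    (hθπ_int : Integrable (fun s' => V (t + 1) s' • ψ t s') (μ t))
    (m : S → A → ℝ)
    (hm : ∀ s a, m s a =
      φ t s a ⬝ᵥ (Sig⁻¹ *ᵥ ∑ i,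
        ((r t (sD i) (aD i) - φD i ⬝ᵥ θr t) +
          ∫ s', (p t (sD i) (aD i) s' - φD i ⬝ᵥ ψ t s') * Vb s' ∂(μ t)) • φD i)
      + (Q t s a - φ t s a ⬝ᵥ θπ)
      - ∫ s', (p t s a s' - φ t s a ⬝ᵥ ψ t s') * (Vb s' - V (t + 1) s') ∂(μ t))
    -- boundedness of the regression value function
    (hVb_2H : ∀ s, |Vb s| ≤ 2 * H)
    (hVbV_3H : ∀ s, |Vb s - V (t + 1) s| ≤ 3 * H) :
    ∀ s a,
      |m s a| ≤ 4 * ε * H *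
        (Real.sqrt ((d : ℝ) * k) * Real.sqrt (φ t s a ⬝ᵥ (Sig⁻¹ *ᵥ φ t s a)) + 1) :=
  misspecification_bound_general H d φ r hr01 P hP_prob π Q V hV_meas hV_top hQ hV ε hε μ ψ hψ_int
    θr hr_approx p hp_nonneg hp_meas hP_dens hΔP_int hΔP_eps t ht1 htH k lam hlam sD aD φD hφD Sig
    hSig Vb hVb_meas θπ hθπ m hm hVb_2H hVbV_3H
end

section
/- (Bound on the regularized least-squares parameter.) Let λ > 0, let φ_1, …, φ_{k−1} ∈ ℝ^d, and let y_1, …, y_{k−1} ∈ ℝ with |y_i| ≤ B for all i. Set Σ := λ·I + Σ_{i=1}^{k−1} φ_i φ_iᵀ. Then ‖Σ⁻¹ Σ_{i=1}^{k−1} φ_i y_i‖ ≤ B·√(k·d/λ). -/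
open Matrix Finset

/-!
Writing `θ = Σ⁻¹ b` with `b = ∑ yᵢ φᵢ` and `zᵢ = φᵢ ⬝ θ`, the normal equation `Σ θ = b`
tested against `θ` gives `λ ‖θ‖² + ∑ zᵢ² = ∑ yᵢ zᵢ`, i.e. `λ ‖θ‖² = ∑ (yᵢ zᵢ - zᵢ²)`.
Each term is at most `yᵢ² / 4` (AM-GM), so `λ ‖θ‖² ≤ (k - 1) B² / 4`, which is below `k d B²`
as soon as `d ≥ 1`; for `d = 0` there is nothing to prove.
-/

namespace Matrix

variable {n ι : Type*} [Fintype n] [Fintype ι]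

noncomputable def ridgeGram [DecidableEq n] (lam : ℝ) (φ : ι → n → ℝ) : Matrix n n ℝ :=
  lam • 1 + ∑ i, vecMulVec (φ i) (φ i)

variable [DecidableEq n]

theorem ridgeGram_mulVec (lam : ℝ) (φ : ι → n → ℝ) (v : n → ℝ) :
    ridgeGram lam φ *ᵥ v = lam • v + ∑ i, (φ i ⬝ᵥ v) • φ i := by
  simp only [ridgeGram, add_mulVec, smul_mulVec, one_mulVec, sum_mulVec, vecMulVec_mulVec,
    op_smul_eq_smul]

theorem dotProduct_ridgeGram_mulVec (lam : ℝ) (φ : ι → n → ℝ) (v : n → ℝ) :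
    v ⬝ᵥ (ridgeGram lam φ *ᵥ v) = lam * (v ⬝ᵥ v) + ∑ i, (φ i ⬝ᵥ v) ^ 2 := by
  rw [ridgeGram_mulVec, dotProduct_add, dotProduct_smul, dotProduct_sum, smul_eq_mul]
  congr 1
  exact sum_congr rfl fun i _ => by rw [dotProduct_smul, smul_eq_mul, dotProduct_comm, sq]

theorem posDef_ridgeGram {lam : ℝ} (hlam : 0 < lam) (φ : ι → n → ℝ) :
    (ridgeGram lam φ).PosDef :=
  (PosDef.one.smul hlam).add_posSemidef <|
    posSemidef_sum _ fun i _ => by simpa using posSemidef_vecMulVec_self_star (φ i)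

theorem ridgeGram_mulVec_inv_mulVec {lam : ℝ} (hlam : 0 < lam) (φ : ι → n → ℝ) (b : n → ℝ) :
    ridgeGram lam φ *ᵥ ((ridgeGram lam φ)⁻¹ *ᵥ b) = b := by
  have hdet := (isUnit_iff_isUnit_det _).mp (posDef_ridgeGram hlam φ).isUnit
  rw [mulVec_mulVec, mul_nonsing_inv _ hdet, one_mulVec]

theorem mul_dotProduct_self_le_of_ridgeGram_mulVec_eq {lam : ℝ} {φ : ι → n → ℝ} {y : ι → ℝ}
    {θ : n → ℝ} (hθ : ridgeGram lam φ *ᵥ θ = ∑ i, y i • φ i) :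
    lam * (θ ⬝ᵥ θ) ≤ (∑ i, y i ^ 2) / 4 := by
  have hbalance : lam * (θ ⬝ᵥ θ) = ∑ i, (y i * (φ i ⬝ᵥ θ) - (φ i ⬝ᵥ θ) ^ 2) := by
    have := dotProduct_ridgeGram_mulVec lam φ θ
    rw [hθ, dotProduct_sum] at this
    simp only [dotProduct_comm θ, smul_dotProduct, smul_eq_mul, sum_sub_distrib] at this ⊢
    linarith
  rw [hbalance, sum_div]
  exact sum_le_sum fun i _ => by nlinarith [sq_nonneg (y i - 2 * (φ i ⬝ᵥ θ))]

end Matrix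

theorem sum_sq_le_card_mul_sq {ι : Type*} [Fintype ι] {y : ι → ℝ} {B : ℝ} (hy : ∀ i, |y i| ≤ B) :
    ∑ i, y i ^ 2 ≤ Fintype.card ι * B ^ 2 := by
  simpa using sum_le_card_nsmul univ (fun i => y i ^ 2) (B ^ 2) fun i _ =>
    sq_abs (y i) ▸ pow_le_pow_left₀ (abs_nonneg _) (hy i) 2

/-- Bound on the regularized least-squares parameter.
For `Σ = λ I + ∑_{i=1}^{k-1} φ_i φ_iᵀ` with `λ > 0` and responses `|y_i| ≤ B`,
`‖Σ⁻¹ ∑_{i=1}^{k-1} y_i φ_i‖ ≤ B √(k d / λ)` (Euclidean norm). -/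
theorem ridge_parameter_bound
    (d k : ℕ) (lam : ℝ) (hlam : 0 < lam)
    (φ : Fin (k - 1) → (Fin d → ℝ)) (y : Fin (k - 1) → ℝ)
    (B : ℝ) (hB : 0 ≤ B) (hy : ∀ i, |y i| ≤ B)
    (Sig : Matrix (Fin d) (Fin d) ℝ)
    (hSig : Sig = lam • (1 : Matrix (Fin d) (Fin d) ℝ) +
      ∑ i, Matrix.vecMulVec (φ i) (φ i)) :
    Real.sqrt ((Sig⁻¹ *ᵥ ∑ i, y i • φ i) ⬝ᵥ (Sig⁻¹ *ᵥ ∑ i, y i • φ i)) ≤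
      B * Real.sqrt ((k : ℝ) * d / lam) := by
  obtain rfl : Sig = ridgeGram lam φ := hSig
  set θ := (ridgeGram lam φ)⁻¹ *ᵥ ∑ i, y i • φ i
  rcases Nat.eq_zero_or_pos d with rfl | hd
  · simp [dotProduct]
  have hθ : ridgeGram lam φ *ᵥ θ = ∑ i, y i • φ i := ridgeGram_mulVec_inv_mulVec hlam φ _
  have hsq : ∑ i, y i ^ 2 ≤ ((k - 1 : ℕ) : ℝ) * B ^ 2 := by
    simpa using sum_sq_le_card_mul_sq hy
  have hcount : ((k - 1 : ℕ) : ℝ) ≤ k * d := by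
    calc ((k - 1 : ℕ) : ℝ) ≤ k := by exact_mod_cast k.sub_le 1
      _ ≤ k * d := le_mul_of_one_le_right k.cast_nonneg (by exact_mod_cast hd)
  have hnorm : θ ⬝ᵥ θ ≤ B ^ 2 * (k * d / lam) := by
    rw [← mul_div_assoc, le_div_iff₀ hlam]
    nlinarith [mul_dotProduct_self_le_of_ridgeGram_mulVec_eq hθ,
      mul_le_mul_of_nonneg_right hcount (sq_nonneg B)]
  calc Real.sqrt (θ ⬝ᵥ θ) ≤ Real.sqrt (B ^ 2 * (k * d / lam)) := Real.sqrt_le_sqrt hnorm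
    _ = B * Real.sqrt (k * d / lam) := by rw [Real.sqrt_mul (sq_nonneg B), Real.sqrt_sq hB]
end

section
/- (Warmup bound.) Let λ > 0, 0 < α ≤ 1, and let φ_{tk} ∈ ℝ^d for t ∈ {1,…,H}, k ∈ {1,…,K} with ‖φ_{tk}‖ ≤ L_φ for all t, k. For each t and k set Σ_{tk} := λ·I + Σ_{i=1}^{k−1} φ_{ti} φ_{ti}ᵀ. Then Σ_{k=1}^{K} Σ_{t=1}^{H} H·𝟙{‖φ_{tk}‖_{Σ_{tk}⁻¹} > α} ≤ (2·H²·d / α²) · log((λ + K·L_φ²)/λ). -/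
/-! For a fixed step `t`, the matrices `Σ_{t,k}` grow by rank-one updates, so the matrix
determinant lemma makes `∑_k log (1 + ‖φ_{tk}‖²_{Σ_{tk}⁻¹})` telescope to
`log det Σ_{t,K+1} - d log λ`. By Cauchy–Schwarz every Rayleigh quotient of `Σ_{t,K+1}`, hence
every eigenvalue, is at most `λ + K L_φ²`, so the telescoped sum is at most
`d log ((λ + K L_φ²) / λ)`. Finally, when `‖φ_{tk}‖_{Σ_{tk}⁻¹} > α` with `α ≤ 1`, the term
`log (1 + ‖φ_{tk}‖²_{Σ_{tk}⁻¹})` is at least `log (1 + α²) ≥ α² / 2`, so each penalty `H` is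
at most `(2H / α²)` times it; summing over the `H` steps gives the extra factor `H`. -/

open Matrix Finset

namespace Matrix

variable {n : Type*} [Fintype n]

theorem det_add_vecMulVec [DecidableEq n] {R : Type*} [CommRing R] {A : Matrix n n R}
    (hA : IsUnit A.det) (u v : n → R) :
    (A + vecMulVec u v).det = A.det * (1 + v ⬝ᵥ (A⁻¹ *ᵥ u)) := by
  rw [vecMulVec_eq Unit, det_add_replicateCol_mul_replicateRow hA, det_unique (1 + _),
    Matrix.mul_assoc, ← replicateCol_mulVec]
  rfl

theorem dotProduct_sum_vecMulVec_mulVec {ι : Type*} (s : Finset ι) (u : ι → n → ℝ)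
    (x : n → ℝ) : x ⬝ᵥ ((∑ i ∈ s, vecMulVec (u i) (u i)) *ᵥ x) = ∑ i ∈ s, (u i ⬝ᵥ x) ^ 2 := by
  simp [sum_mulVec, dotProduct_sum, vecMulVec_mulVec, dotProduct_comm _ (u _), sq]

theorem posSemidef_sum_vecMulVec {ι : Type*} (s : Finset ι) (u : ι → n → ℝ) :
    (∑ i ∈ s, vecMulVec (u i) (u i)).PosSemidef :=
  posSemidef_sum s fun i _ => by simpa using posSemidef_vecMulVec_self_star (u i)

theorem posDef_smul_one_add_sum_vecMulVec [DecidableEq n] {ι : Type*} {lam : ℝ}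
    (hlam : 0 < lam) (s : Finset ι) (u : ι → n → ℝ) :
    (lam • (1 : Matrix n n ℝ) + ∑ i ∈ s, vecMulVec (u i) (u i)).PosDef :=
  (PosDef.one.smul hlam).add_posSemidef (posSemidef_sum_vecMulVec s u)

theorem PosDef.dotProduct_inv_mulVec_nonneg [DecidableEq n] {A : Matrix n n ℝ} (hA : A.PosDef)
    (u : n → ℝ) : 0 ≤ u ⬝ᵥ (A⁻¹ *ᵥ u) := by
  simpa using hA.inv.posSemidef.dotProduct_mulVec_nonneg u

theorem IsHermitian.dotProduct_eigenvectorBasis_self [DecidableEq n] {M : Matrix n n ℝ}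
    (hM : M.IsHermitian) (i : n) : ⇑(hM.eigenvectorBasis i) ⬝ᵥ ⇑(hM.eigenvectorBasis i) = 1 := by
  have h := real_inner_self_eq_norm_sq (hM.eigenvectorBasis i)
  rw [hM.eigenvectorBasis.orthonormal.1 i, EuclideanSpace.inner_eq_star_dotProduct] at h
  simpa using h

theorem PosSemidef.det_le_pow [DecidableEq n] {M : Matrix n n ℝ} (hM : M.PosSemidef) {c : ℝ}
    (hc : ∀ x, x ⬝ᵥ (M *ᵥ x) ≤ c * (x ⬝ᵥ x)) : M.det ≤ c ^ Fintype.card n := by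
  have eigenvalues_le (i : n) : hM.1.eigenvalues i ≤ c := by
    simpa [hM.1.dotProduct_eigenvectorBasis_self, hM.1.mulVec_eigenvectorBasis]
      using hc (hM.1.eigenvectorBasis i)
  calc M.det = ∏ i, hM.1.eigenvalues i := by simpa using hM.1.det_eq_prod_eigenvalues
    _ ≤ ∏ _i : n, c :=
      prod_le_prod (fun i _ => hM.eigenvalues_nonneg i) fun i _ => eigenvalues_le i
    _ = c ^ Fintype.card n := by simp

theorem det_smul_one_add_sum_vecMulVec_le [DecidableEq n] {ι : Type*} {lam B : ℝ}
    (hlam : 0 ≤ lam) (s : Finset ι) (u : ι → n → ℝ) (hu : ∀ i ∈ s, u i ⬝ᵥ u i ≤ B) :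
    (lam • (1 : Matrix n n ℝ) + ∑ i ∈ s, vecMulVec (u i) (u i)).det ≤
      (lam + #s * B) ^ Fintype.card n := by
  refine ((PosSemidef.one.smul hlam).add (posSemidef_sum_vecMulVec s u)).det_le_pow fun x => ?_
  have sq_le (i) (hi : i ∈ s) : (u i ⬝ᵥ x) ^ 2 ≤ B * (x ⬝ᵥ x) := by
    calc (u i ⬝ᵥ x) ^ 2 ≤ (u i ⬝ᵥ u i) * (x ⬝ᵥ x) := by
          simpa [dotProduct, sq] using sum_mul_sq_le_sq_mul_sq univ (u i) x
      _ ≤ B * (x ⬝ᵥ x) := mul_le_mul_of_nonneg_right (hu i hi) (dotProduct_self_star_nonneg x)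
  have hsum := sum_le_sum sq_le
  simp only [add_mulVec, dotProduct_add, smul_mulVec, one_mulVec, dotProduct_smul,
    dotProduct_sum_vecMulVec_mulVec, sum_const, nsmul_eq_mul, smul_eq_mul] at hsum ⊢
  nlinarith

theorem log_det_add_sum_vecMulVec [DecidableEq n] {A : Matrix n n ℝ} (hA : A.PosDef)
    (u : ℕ → n → ℝ) {a m : ℕ} (ham : a ≤ m) :
    Real.log (A + ∑ i ∈ Ico a m, vecMulVec (u i) (u i)).det = Real.log A.det +
      ∑ k ∈ Ico a m,
        Real.log (1 + u k ⬝ᵥ ((A + ∑ i ∈ Ico a k, vecMulVec (u i) (u i))⁻¹ *ᵥ u k)) := by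
  induction m, ham using Nat.le_induction with
  | base => simp
  | succ m ham ih =>
    have hPD := hA.add_posSemidef (posSemidef_sum_vecMulVec (Ico a m) u)
    have hq := hPD.dotProduct_inv_mulVec_nonneg (u m)
    rw [sum_Ico_succ_top ham, ← add_assoc,
      det_add_vecMulVec (isUnit_iff_ne_zero.2 hPD.det_pos.ne'),
      Real.log_mul hPD.det_pos.ne' (by positivity), ih, sum_Ico_succ_top ham, add_assoc]

theorem sum_log_one_add_dotProduct_inv_mulVec_le [DecidableEq n] {lam B : ℝ}
    (hlam : 0 < lam) (hB : 0 ≤ B) (u : ℕ → n → ℝ) {a m : ℕ} (ham : a ≤ m)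
    (hu : ∀ k ∈ Ico a m, u k ⬝ᵥ u k ≤ B) :
    ∑ k ∈ Ico a m, Real.log (1 + u k ⬝ᵥ
        ((lam • (1 : Matrix n n ℝ) + ∑ i ∈ Ico a k, vecMulVec (u i) (u i))⁻¹ *ᵥ u k)) ≤
      Fintype.card n * Real.log ((lam + (m - a : ℕ) * B) / lam) := by
  have hPD := (PosDef.one (n := n) (R := ℝ)).smul hlam
  have hdet := Real.log_le_log (posDef_smul_one_add_sum_vecMulVec hlam (Ico a m) u).det_pos
    (det_smul_one_add_sum_vecMulVec_le hlam.le (Ico a m) u hu)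
  rw [log_det_add_sum_vecMulVec hPD u ham, det_smul, det_one, mul_one, Real.log_pow,
    Real.log_pow, Nat.card_Ico] at hdet
  rw [Real.log_div (by positivity) hlam.ne']
  linarith

end Matrix

theorem Real.half_le_log_one_add {x y : ℝ} (hx0 : 0 ≤ x) (hx1 : x ≤ 1) (hxy : x ≤ y) :
    x / 2 ≤ Real.log (1 + y) :=
  calc x / 2 ≤ 2 * x / (x + 2) := by rw [div_le_div_iff₀ two_pos (by linarith)]; nlinarith
    _ ≤ Real.log (1 + x) := Real.le_log_one_add_of_nonneg hx0
    _ ≤ Real.log (1 + y) := Real.log_le_log (by linarith) (by linarith)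

theorem ite_lt_sqrt_le_mul_log_one_add {α q c : ℝ} (hα0 : 0 < α) (hα1 : α ≤ 1) (hq : 0 ≤ q)
    (hc : 0 ≤ c) : (if α < √q then c else 0) ≤ 2 * c / α ^ 2 * Real.log (1 + q) := by
  split_ifs with h
  · have hlog := Real.half_le_log_one_add (sq_nonneg α) (pow_le_one₀ hα0.le hα1)
      ((Real.lt_sqrt hα0.le).1 h).le
    rw [div_mul_eq_mul_div, le_div_iff₀ (by positivity)]
    nlinarith
  · exact mul_nonneg (by positivity) (Real.log_nonneg (by linarith))

/-- Warmup bound.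
With `Σ_{tk} = λ I + ∑_{i=1}^{k-1} φ_{ti} φ_{ti}ᵀ`, `λ > 0`, `0 < α ≤ 1`, and
`‖φ_{tk}‖ ≤ L_φ`, the total default penalty is bounded:
`∑_{k=1}^{K} ∑_{t=1}^{H} H·𝟙{‖φ_{tk}‖_{Σ_{tk}⁻¹} > α} ≤ (2 H² d / α²) log((λ + K L_φ²)/λ)`. -/
theorem warmup_bound
    (d H K : ℕ) (lam : ℝ) (hlam : 0 < lam)
    (α : ℝ) (hα0 : 0 < α) (hα1 : α ≤ 1) (Lφ : ℝ)
    (φ : ℕ → ℕ → (Fin d → ℝ))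
    (hφ : ∀ t ∈ Finset.Icc 1 H, ∀ k ∈ Finset.Icc 1 K,
      Real.sqrt (φ t k ⬝ᵥ φ t k) ≤ Lφ)
    (Sig : ℕ → ℕ → Matrix (Fin d) (Fin d) ℝ)
    (hSig : ∀ t k, Sig t k = lam • (1 : Matrix (Fin d) (Fin d) ℝ) +
      ∑ i ∈ Finset.Icc 1 (k - 1), Matrix.vecMulVec (φ t i) (φ t i)) :
    ∑ k ∈ Finset.Icc 1 K, ∑ t ∈ Finset.Icc 1 H,
      (if α < Real.sqrt (φ t k ⬝ᵥ ((Sig t k)⁻¹ *ᵥ φ t k)) then (H : ℝ) else 0) ≤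
      (2 * H ^ 2 * d / α ^ 2) * Real.log ((lam + K * Lφ ^ 2) / lam) := by
  have Icc_sub_one (k : ℕ) : Icc 1 (k - 1) = Ico 1 k := by
    ext; simp only [mem_Icc, mem_Ico]; omega
  simp only [Icc_sub_one] at hSig
  have hq (t k : ℕ) : 0 ≤ φ t k ⬝ᵥ ((Sig t k)⁻¹ *ᵥ φ t k) :=
    hSig t k ▸ (posDef_smul_one_add_sum_vecMulVec hlam _ _).dotProduct_inv_mulVec_nonneg _
  have per_step (t : ℕ) (ht : t ∈ Icc 1 H) : ∑ k ∈ Icc 1 K,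
      (if α < Real.sqrt (φ t k ⬝ᵥ ((Sig t k)⁻¹ *ᵥ φ t k)) then (H : ℝ) else 0) ≤
      2 * H / α ^ 2 * (d * Real.log ((lam + K * Lφ ^ 2) / lam)) := by
    have hφt (k : ℕ) (hk : k ∈ Ico 1 (K + 1)) : φ t k ⬝ᵥ φ t k ≤ Lφ ^ 2 :=
      (Real.sqrt_le_iff.1 (hφ t ht k (by simpa using hk))).2
    calc _ ≤ ∑ k ∈ Icc 1 K,
          2 * H / α ^ 2 * Real.log (1 + φ t k ⬝ᵥ ((Sig t k)⁻¹ *ᵥ φ t k)) :=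
          sum_le_sum fun k _ => ite_lt_sqrt_le_mul_log_one_add hα0 hα1 (hq t k) H.cast_nonneg
      _ ≤ _ := by
        rw [← mul_sum]
        gcongr
        simpa [hSig, Ico_add_one_right_eq_Icc] using
          sum_log_one_add_dotProduct_inv_mulVec_le hlam (sq_nonneg Lφ) (φ t)
            (Nat.le_add_left 1 K) hφt
  rw [sum_comm]
  calc _ ≤ ∑ _t ∈ Icc 1 H, 2 * H / α ^ 2 * (d * Real.log ((lam + K * Lφ ^ 2) / lam)) :=
        sum_le_sum per_step
    _ = _ := by simp only [sum_const, Nat.card_Icc, add_tsub_cancel_right, nsmul_eq_mul]; ring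
end

section
/- (Sum of features in the final norm.) Let λ > 0 and φ_1, …, φ_{k−1} ∈ ℝ^d, and set Σ_k := λ·I + Σ_{i=1}^{k−1} φ_i φ_iᵀ. Then Σ_{i=1}^{k−1} ‖φ_i‖²_{Σ_k⁻¹} ≤ d. -/
open Matrix Finset

namespace Matrix

theorem sum_dotProduct_mulVec_eq_trace_mul_sum_vecMulVec {n ι R : Type*} [Fintype n]
    [CommSemiring R] (M : Matrix n n R) (s : Finset ι) (v : ι → n → R) :
    ∑ i ∈ s, v i ⬝ᵥ (M *ᵥ v i) = (M * ∑ i ∈ s, vecMulVec (v i) (v i)).trace := by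
  simp only [Finset.mul_sum, trace_sum, mul_vecMulVec, trace_vecMulVec, dotProduct_comm]

/-- Since `(λ • 1 + B)⁻¹ * B = 1 - λ • (λ • 1 + B)⁻¹`, the defect from `card n` is
`λ * trace (λ • 1 + B)⁻¹ ≥ 0`. -/
theorem trace_inv_smul_one_add_mul_le_card {n : Type*} [Fintype n] [DecidableEq n]
    {lam : ℝ} (hlam : 0 ≤ lam) {B : Matrix n n ℝ} (hA : (lam • 1 + B).PosDef) :
    ((lam • 1 + B)⁻¹ * B).trace ≤ Fintype.card n := by
  set A := lam • (1 : Matrix n n ℝ) + B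
  have hAinv : A⁻¹ * A = 1 := nonsing_inv_mul A ((isUnit_iff_isUnit_det A).mp hA.isUnit)
  have hB : B = A - lam • 1 := by simp [A]
  have htr : (A⁻¹ * B).trace = Fintype.card n - lam * A⁻¹.trace := by
    rw [hB, Matrix.mul_sub, hAinv, Matrix.mul_smul, Matrix.mul_one, trace_sub, trace_smul,
      trace_one, smul_eq_mul]
  have := mul_nonneg hlam hA.inv.posSemidef.trace_nonneg
  linarith

end Matrix

/-- Sum of features in the final norm.
For `Σ_k = λ I + ∑_{i=1}^{k-1} φ_i φ_iᵀ` with `λ > 0`, we have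
`∑_{i=1}^{k-1} ‖φ_i‖²_{Σ_k⁻¹} ≤ d`, where `‖x‖²_{Σ_k⁻¹} = xᵀ Σ_k⁻¹ x`. -/
theorem sum_sq_features_final_norm_le
    (d k : ℕ) (lam : ℝ) (hlam : 0 < lam)
    (φ : Fin (k - 1) → (Fin d → ℝ))
    (Sig : Matrix (Fin d) (Fin d) ℝ)
    (hSig : Sig = lam • (1 : Matrix (Fin d) (Fin d) ℝ) +
      ∑ i, Matrix.vecMulVec (φ i) (φ i)) :
    ∑ i, φ i ⬝ᵥ (Sig⁻¹ *ᵥ φ i) ≤ (d : ℝ) := by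
  have hfeatures : (∑ i, vecMulVec (φ i) (φ i)).PosSemidef :=
    posSemidef_sum _ fun i _ => by simpa using posSemidef_vecMulVec_self_star (φ i)
  have hSigPD : Sig.PosDef := hSig ▸ (PosDef.one.smul hlam).add_posSemidef hfeatures
  calc ∑ i, φ i ⬝ᵥ (Sig⁻¹ *ᵥ φ i) = (Sig⁻¹ * ∑ i, vecMulVec (φ i) (φ i)).trace :=
        sum_dotProduct_mulVec_eq_trace_mul_sum_vecMulVec _ _ _
    _ ≤ Fintype.card (Fin d) := by
        subst hSig
        exact trace_inv_smul_one_add_mul_le_card hlam.le hSigPD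
    _ = d := by rw [Fintype.card_fin]
end
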